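/- Assume G is abelian and let 𝓗 be the set of closed subgroups of G different from G. Then Γ̄(s, t, (t_H)_{H∈𝓗}) = e^{st}·(Γ̃(s,(t_H)_{H∈𝓗}) − 1) as formal power series. -/

import Mathlib

/-
In a forest of 𝓕′ on `h + n` leaves with `h` fallen leaves, delete the fallen
leaves and renumber the others increasingly by `{1,…,n}`. Conversely, a forest of 𝓕″ on
`{1,…,n}` together with an `h`-subset `S ⊆ {1,…,h+n}` gives back a forest of 𝓕′, by sending
the leaves order-preservingly onto the complement of `S`; renumbering increasingly keeps
condition (5). Fallen leaves are components of their own, so this bijection lowers the number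
of components by `h` and keeps every `a_H`. Hence `γ′(h, j, a) = C(h+n, h) · γ″(j-h, a)`, and
dividing by `(h+n)! = C(h+n, h) h! n!` gives the coefficient of `s^j t^h ∏ t_H^{a_H}` in
`e^{st} (Γ̃ - 1)`: as `Γ̃` does not involve `t`, only the term `(st)^h / h!` of `e^{st}`
contributes.
-/

variable {G : Type*} [CommGroup G] {V : Type*} [AddCommGroup V] [Module ℂ V]

/-- The subspace `Fix(H)` of vectors fixed by every element of the subgroup `H`
under the representation `ρ`. -/
def fixedSpace (ρ : Representation ℂ G V) (H : Subgroup G) : Submodule ℂ V where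
  carrier := {v | ∀ h ∈ H, ρ h v = v}
  add_mem' := by
    intro a b ha hb h hh
    rw [map_add, ha h hh, hb h hh]
  zero_mem' := by
    intro h hh
    exact map_zero _
  smul_mem' := by
    intro c a ha h hh
    rw [map_smul, ha h hh]

/-- A subgroup `H ≤ G` is closed (w.r.t. `ρ`) if every subgroup `K` with `H ≤ K`
and `Fix(K) = Fix(H)` satisfies `K = H`. -/
def IsClosedSubgroup (ρ : Representation ℂ G V) (H : Subgroup G) : Prop :=
  ∀ K : Subgroup G, H ≤ K → fixedSpace ρ K = fixedSpace ρ H → K = H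

open scoped Pointwise

/-- A vertex of a labelled forest on the leaf set `{1,…,n}` (encoded as `Fin n`):
`leaves` is the set of leaves of the forest lying below the vertex, `label` is the
subgroup labelling the vertex, and, for a leaf `l` below the vertex, `coset l` is
the coset `g_l K` obtained by composing the edge labels on the path from the
vertex down to the leaf `l` (as in the paper, if the path carries, from the top,
the coset labels `a₁K, a₂K₂, …, a_lK_l`, then `coset l = a_l ⋯ a₂ a₁ K`); on
leaves not below the vertex, `coset` is `∅`.  Within the forests considered below
a vertex is uniquely determined by this data, and conversely the single-edge
labels are recovered from it, so this encoding is faithful. -/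
structure FVertex (n : ℕ) (G : Type*) [Group G] where
  leaves : Finset (Fin n)
  label : Subgroup G
  coset : Fin n → Set G

/-- `[P] ≤ [Q]` for conjugacy classes of subgroups: some `G`-conjugate of `P` is
contained in `Q`. -/
def ConjLE {G : Type*} [Group G] (P Q : Subgroup G) : Prop :=
  ∃ a : G, P.map (MulAut.conj a).toMonoidHom ≤ Q

/-- `[P] ≨ [Q]` (strictly). -/
def ConjLT {G : Type*} [Group G] (P Q : Subgroup G) : Prop :=
  ConjLE P Q ∧ ¬ ConjLE Q P

/-- `v` lies strictly below `w` in the forest: either the leaf set of `v` is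
strictly smaller, or the leaf sets agree and the vertices lie on a common chain
of unique-child vertices, ordered by their labels. -/
def FVertex.below {n : ℕ} {G : Type*} [Group G] (v w : FVertex n G) : Prop :=
  v.leaves ⊂ w.leaves ∨ (v.leaves = w.leaves ∧ ConjLT v.label w.label)

/-- `w` is a direct descendant (child) of `v` in the forest `F`. -/
def IsDirectChild {n : ℕ} {G : Type*} [Group G] (F : Set (FVertex n G))
    (w v : FVertex n G) : Prop :=
  w.below v ∧ ¬ ∃ u ∈ F, w.below u ∧ u.below v

/-- The forests of the family 𝓕(n,G,V): rooted oriented forests with leaves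
labelled bijectively by `{1,…,n}` (isolated "fallen" leaves are allowed and are
implicit: they are the leaves lying below no vertex), at least one internal
vertex, internal vertices labelled by closed subgroups of `G`, and edges labelled
by cosets, subject to conditions (1)-(5) of the paper.  A forest is encoded by
its set of internal vertices, each vertex carrying its leaf set, its subgroup
label and the composed coset data of the paths towards its leaves. -/
def IsFGForest {n : ℕ} (ρ : Representation ℂ G V) (F : Set (FVertex n G)) : Prop :=
  -- a finite forest with at least one internal vertex
  F.Finite ∧ F.Nonempty ∧
  -- every internal vertex has at least one leaf below it
  (∀ v ∈ F, v.leaves.Nonempty) ∧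
  -- internal vertices are labelled by closed subgroups
  (∀ v ∈ F, IsClosedSubgroup ρ v.label) ∧
  -- the leaf sets form a laminar family (forest structure)
  (∀ v ∈ F, ∀ w ∈ F, (v.leaves ∩ w.leaves).Nonempty →
      v.leaves ⊆ w.leaves ∨ w.leaves ⊆ v.leaves) ∧
  -- (1) if an internal vertex labelled P descends from one labelled Q, then [P] ≤ [Q]
  (∀ v ∈ F, ∀ w ∈ F, w.leaves ⊂ v.leaves → ConjLE w.label v.label) ∧
  -- (1)&(2) vertices with the same leaf set form a chain of unique children with
  -- strictly increasing labels (in particular a unique internal child has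
  -- strictly smaller label class)
  (∀ v ∈ F, ∀ w ∈ F, v ≠ w → v.leaves = w.leaves →
      ConjLT v.label w.label ∨ ConjLT w.label v.label) ∧
  -- (2) if a leaf is the unique child of a vertex, its label is not {e}
  (∀ v ∈ F, ∀ l : Fin n, v.leaves = {l} →
      (¬ ∃ w ∈ F, w ≠ v ∧ w.leaves = v.leaves ∧ ConjLT w.label v.label) →
      v.label ≠ ⊥) ∧
  -- (3) the label G appears in at most one tree, and a vertex labelled G has at
  -- most one direct descendant labelled G: the G-labelled vertices are pairwise
  -- comparable
  (∀ v ∈ F, ∀ w ∈ F, v.label = ⊤ → w.label = ⊤ → v = w ∨ v.below w ∨ w.below v) ∧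
  -- (4) the (composed) coset data consists of left cosets of the vertex label …
  (∀ v ∈ F, ∀ l ∈ v.leaves, ∃ a : G, v.coset l = a • (v.label : Set G)) ∧
  (∀ v ∈ F, ∀ l : Fin n, l ∉ v.leaves → v.coset l = ∅) ∧
  -- … and is compatible along edges: the edge from `v` (labelled Q) to a direct
  -- child `w` (labelled P) carries a coset label aQ with a⁻¹Pa ⊆ Q, and (by (5))
  -- the edge towards the child subtree containing the smallest leaf carries eQ
  (∀ v ∈ F, ∀ w ∈ F, IsDirectChild F w v →
      ∃ a : G, (w.label.map (MulAut.conj a⁻¹).toMonoidHom ≤ v.label) ∧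
        (∀ l ∈ w.leaves, v.coset l = w.coset l * (a • (v.label : Set G))) ∧
        (∀ hv : v.leaves.Nonempty, v.leaves.min' hv ∈ w.leaves → a ∈ v.label)) ∧
  -- (5) the composed coset towards the smallest leaf below a vertex is eK
  (∀ v ∈ F, ∀ hv : v.leaves.Nonempty, v.coset (v.leaves.min' hv) = (v.label : Set G))

/-- The set of roots (maximal vertices) of the forest `F`: each corresponds to a
tree of `F`. -/
def rootsOf {n : ℕ} {G : Type*} [Group G] (F : Set (FVertex n G)) :
    Set (FVertex n G) :=
  {v | v ∈ F ∧ ∀ w ∈ F, ¬ v.below w}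

open Classical in
/-- The fallen leaves of `F`: the leaves lying below no internal vertex. -/
noncomputable def fallenLeaves {n : ℕ} {G : Type*} [Group G]
    (F : Set (FVertex n G)) : Finset (Fin n) :=
  Finset.univ.filter fun l => ∀ v ∈ F, l ∉ v.leaves

/-- The number of connected components of `F` (trees and fallen leaves each count
as one component). -/
noncomputable def components {n : ℕ} {G : Type*} [Group G]
    (F : Set (FVertex n G)) : ℕ :=
  (rootsOf F).ncard + (fallenLeaves F).card

open Classical in
/-- The number of leaves of `F` attached to `H`-labelled vertices, i.e. whose
parent (the minimal internal vertex above them) is labelled `H`. -/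
noncomputable def attachedCount {n : ℕ} {G : Type*} [Group G]
    (F : Set (FVertex n G)) (H : Subgroup G) : ℕ :=
  (Finset.univ.filter fun l : Fin n => ∃ v ∈ F, l ∈ v.leaves ∧ v.label = H ∧
    ∀ w ∈ F, l ∈ w.leaves → (v = w ∨ v.below w)).card

/-- An `H`-tree on the leaf set `{1,…,m}`: a single rooted oriented tree, with
leaves bijectively labelled by `{1,…,m}`, all of whose internal vertices are
labelled by the (closed) subgroup `H`, with edges labelled by cosets of `H`,
normalized as in (5); every internal vertex has at least two children or a single
child which is a leaf (the latter only if `H ≠ {e}`). -/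
def IsHTree {m : ℕ} (ρ : Representation ℂ G V) (H : Subgroup G)
    (F : Set (FVertex m G)) : Prop :=
  IsFGForest ρ F ∧ (∀ v ∈ F, v.label = H) ∧ ∃ v ∈ F, v.leaves = Finset.univ

/-- `λ_{H,i}`: the number of `H`-trees on the leaf set `{1,…,i}`. -/
noncomputable def lamHT (ρ : Representation ℂ G V) (H : Subgroup G) (i : ℕ) : ℕ :=
  Nat.card {F : Set (FVertex i G) // IsHTree ρ H F}

/-- Formal exponential of a multivariate power series (intended for series with
zero constant term, for which the coefficientwise sum Σ_m f^m/m! is finite: the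
coefficient of a monomial `d` in `f^m` vanishes for `m` beyond the total degree
of `d`). -/
noncomputable def mvExp {σ : Type*} (f : MvPowerSeries σ ℚ) : MvPowerSeries σ ℚ :=
  fun d => ∑ m ∈ Finset.range (d.sum (fun _ e => e) + 1),
    (m.factorial : ℚ)⁻¹ * MvPowerSeries.coeff d (f ^ m)

instance finiteSubgroupOfFinite [Finite G] : Finite (Subgroup G) :=
  Finite.of_injective (fun H : Subgroup G => (H : Set G)) SetLike.coe_injective

/-- 𝓗: the set of closed subgroups of `G` different from `G`. -/
def ClosedProper (ρ : Representation ℂ G V) : Type _ :=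
  {H : Subgroup G // IsClosedSubgroup ρ H ∧ H ≠ ⊤}

instance [Finite G] (ρ : Representation ℂ G V) : Finite (ClosedProper ρ) := by
  unfold ClosedProper; infer_instance

/-- The variables: `s`, `t`, and one variable `t_H` for each `H ∈ 𝓗`. -/
abbrev MVarT (ρ : Representation ℂ G V) : Type _ := Unit ⊕ Unit ⊕ ClosedProper ρ

variable (ρ : Representation ℂ G V)

/-- The variable `s`. -/
def sVar : MVarT ρ := Sum.inl ()

/-- The variable `t`. -/
def tVar : MVarT ρ := Sum.inr (Sum.inl ())

/-- The variable `t_H`. -/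
def tHVar (H : ClosedProper ρ) : MVarT ρ := Sum.inr (Sum.inr H)

/-- `Σ_{H∈𝓗} a_H` for a monomial `d`. -/
noncomputable def leafDeg (d : MVarT ρ →₀ ℕ) : ℕ := ∑ᶠ H : ClosedProper ρ, d (tHVar ρ H)

variable [Fintype G] [FiniteDimensional ℂ V]

open Classical

/-- The series `Γ̃(s,(t_H)_{H∈𝓗})`: the coefficient of
`s^j ∏_H t_H^{a_H} / (Σ_H a_H)!` is `γ″(j,(a_H))`, the number of forests in
𝓕″(n,G,V) (no G-labels, no fallen leaves), `n = Σ_H a_H`, with `j` connected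
components and, for each `H ∈ 𝓗`, `a_H` leaves attached to `H`-labelled vertices. -/
noncomputable def GammaTildeH : MvPowerSeries (MVarT ρ) ℚ :=
  fun d => if d = 0 then 1 else if d (tVar ρ) ≠ 0 then 0 else
    (Nat.card {F : Set (FVertex (leafDeg ρ d) G) // IsFGForest ρ F ∧
        (∀ v ∈ F, v.label ≠ ⊤) ∧ fallenLeaves F = ∅ ∧ components F = d (sVar ρ) ∧
        ∀ H : ClosedProper ρ, attachedCount F H.1 = d (tHVar ρ H)} : ℚ) /
      (leafDeg ρ d).factorial

/-- The series `Γ̄(s,t,(t_H)_{H∈𝓗})`: the coefficient of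
`s^j t^h ∏_H t_H^{a_H} / (h + Σ_H a_H)!` is `γ′(h,j,(a_H))`, the number of
forests in 𝓕′(n,G,V) (no G-labels), `n = h + Σ_H a_H`, with `h` fallen leaves,
`j` connected components and, for each `H ∈ 𝓗`, `a_H` leaves attached to
`H`-labelled vertices. -/
noncomputable def GammaBarH : MvPowerSeries (MVarT ρ) ℚ :=
  fun d =>
    (Nat.card {F : Set (FVertex (d (tVar ρ) + leafDeg ρ d) G) // IsFGForest ρ F ∧
        (∀ v ∈ F, v.label ≠ ⊤) ∧ (fallenLeaves F).card = d (tVar ρ) ∧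
        components F = d (sVar ρ) ∧
        ∀ H : ClosedProper ρ, attachedCount F H.1 = d (tHVar ρ H)} : ℚ) /
      (d (tVar ρ) + leafDeg ρ d).factorial

namespace Finset

variable {α β : Type*}

theorem forall_map_eq_singleton_imp_iff {f : α ↪ β} {s : Finset α} {p : Prop} :
    (∀ b, s.map f = {b} → p) ↔ ∀ a, s = {a} → p := by
  refine ⟨fun h a ha => h (f a) (by rw [ha, map_singleton]), fun h b hb => ?_⟩
  obtain ⟨a, ha⟩ := card_eq_one.1 (by simpa using congrArg card hb)
  exact h a ha

@[simp] theorem apply_mem_map_orderEmbedding [LE α] [LE β] (f : α ↪o β) {s : Finset α} {a : α} :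
    f a ∈ s.map f.toEmbedding ↔ a ∈ s :=
  mem_map' f.toEmbedding

@[simp] theorem min'_map_orderEmbedding [LinearOrder α] [LinearOrder β] (f : α ↪o β) (s : Finset α) (hs : (s.map f.toEmbedding).Nonempty) :
    (s.map f.toEmbedding).min' hs = f (s.min' (map_nonempty.1 hs)) := by
  simp [map_eq_image, min'_image f.monotone]

end Finset

namespace FVertex

variable {G : Type*} [Group G] {n N : ℕ}

theorem ext {v w : FVertex n G} (hleaves : v.leaves = w.leaves) (hlabel : v.label = w.label)
    (hcoset : v.coset = w.coset) : v = w := by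
  cases v; cases w; simp_all

noncomputable def map (f : Fin n ↪o Fin N) (v : FVertex n G) : FVertex N G :=
  ⟨v.leaves.map f.toEmbedding, v.label, Function.extend f v.coset fun _ => ∅⟩

noncomputable def comap (f : Fin n ↪o Fin N) (v : FVertex N G) : FVertex n G :=
  ⟨v.leaves.preimage f f.injective.injOn, v.label, v.coset ∘ f⟩

variable (f : Fin n ↪o Fin N)

@[simp] theorem map_leaves (v : FVertex n G) : (v.map f).leaves = v.leaves.map f.toEmbedding :=
  rfl

@[simp] theorem map_label (v : FVertex n G) : (v.map f).label = v.label := rfl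

@[simp] theorem map_coset_apply (v : FVertex n G) (k : Fin n) : (v.map f).coset (f k) = v.coset k :=
  f.injective.extend_apply v.coset (fun _ => ∅) k

theorem map_coset_of_notMem_range (v : FVertex n G) {l : Fin N} (hl : l ∉ Set.range f) :
    (v.map f).coset l = ∅ :=
  Function.extend_apply' v.coset (fun _ => ∅) l fun ⟨k, hk⟩ => hl ⟨k, hk⟩

theorem map_injective : Function.Injective (map (G := G) f) := by
  intro v w h
  refine ext ?_ (by simpa using congrArg label h) (funext fun k => ?_)
  · simpa using congrArg leaves h
  · simpa using congrFun (congrArg coset h) (f k)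

@[simp] theorem map_below_map_iff {v w : FVertex n G} : (v.map f).below (w.map f) ↔ v.below w := by
  simp [below, Finset.map_ssubset_map]

theorem comap_map (v : FVertex n G) : (v.map f).comap f = v :=
  ext (Finset.preimage_map _ _) rfl (funext fun k => map_coset_apply f v k)

theorem map_comap {v : FVertex N G} (hleaves : ↑v.leaves ⊆ Set.range f)
    (hcoset : ∀ l ∉ v.leaves, v.coset l = ∅) : (v.comap f).map f = v := by
  refine ext ?_ rfl (funext fun l => ?_)
  · simpa [comap, ← Finset.coe_inj] using Set.image_preimage_eq_of_subset hleaves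
  · by_cases hl : l ∈ Set.range f
    · obtain ⟨k, rfl⟩ := hl
      exact map_coset_apply f _ k
    · rw [map_coset_of_notMem_range f _ hl, hcoset l fun h => hl (hleaves h)]

theorem forall_notMem_map_leaves_coset_eq_empty_iff (v : FVertex n G) :
    (∀ l ∉ v.leaves.map f.toEmbedding, (v.map f).coset l = ∅) ↔
      ∀ k ∉ v.leaves, v.coset k = ∅ := by
  refine ⟨fun h k hk => ?_, fun h l hl => ?_⟩
  · simpa using h (f k) (by simpa using hk)
  · by_cases hr : l ∈ Set.range f
    · obtain ⟨k, rfl⟩ := hr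
      simpa using h k (by simpa using hl)
    · exact map_coset_of_notMem_range f v hr

end FVertex

section Relabel

variable {G : Type*} [Group G] {n N : ℕ} (f : Fin n ↪o Fin N) (F : Set (FVertex n G))

theorem isDirectChild_image_map_iff {v w : FVertex n G} :
    IsDirectChild (FVertex.map f '' F) (w.map f) (v.map f) ↔ IsDirectChild F w v := by
  simp [IsDirectChild]

theorem rootsOf_image_map : rootsOf (FVertex.map f '' F) = FVertex.map f '' rootsOf F := by
  ext u
  constructor
  · rintro ⟨⟨v, hv, rfl⟩, hmax⟩
    exact ⟨v, ⟨hv, fun w hw => by simpa using hmax _ ⟨w, hw, rfl⟩⟩, rfl⟩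
  · rintro ⟨v, ⟨hv, hmax⟩, rfl⟩
    exact ⟨⟨v, hv, rfl⟩, by simpa [Set.forall_mem_image] using hmax⟩

theorem fallenLeaves_image_map :
    fallenLeaves (FVertex.map f '' F) =
      (fallenLeaves F).map f.toEmbedding ∪ (Finset.univ.map f.toEmbedding)ᶜ := by
  ext l
  by_cases hl : l ∈ Set.range f
  · obtain ⟨k, rfl⟩ := hl
    simp [fallenLeaves]
  · have hl' : ∀ k, f k ≠ l := fun k hk => hl ⟨k, hk⟩
    simp [fallenLeaves, hl']

theorem fallenLeaves_image_map_eq_compl_iff :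
    fallenLeaves (FVertex.map f '' F) = (Finset.univ.map f.toEmbedding)ᶜ ↔
      fallenLeaves F = ∅ := by
  rw [fallenLeaves_image_map, Finset.union_eq_right, Finset.subset_compl_iff_disjoint_right,
    Finset.disjoint_map]
  exact disjoint_top

theorem attachedCount_image_map (H : Subgroup G) :
    attachedCount (FVertex.map f '' F) H = attachedCount F H := by
  rw [attachedCount, attachedCount, ← Finset.card_map f.toEmbedding]
  congr 1
  ext l
  by_cases hl : l ∈ Set.range f
  · obtain ⟨k, rfl⟩ := hl
    simp only [Finset.apply_mem_map_orderEmbedding, Finset.mem_filter, Finset.mem_univ, true_and,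
      Set.exists_mem_image, Set.forall_mem_image, FVertex.map_leaves, FVertex.map_label,
      FVertex.map_below_map_iff, (FVertex.map_injective f).eq_iff]
  · have hl' : ∀ k, f k ≠ l := fun k hk => hl ⟨k, hk⟩
    simp [hl']

theorem card_fallenLeaves_le_components : (fallenLeaves F).card ≤ components F :=
  Nat.le_add_left _ _

end Relabel

section ForestRelabel

variable {G : Type*} [CommGroup G] {V : Type*} [AddCommGroup V] [Module ℂ V]
  {ρ : Representation ℂ G V} {n : ℕ} {F : Set (FVertex n G)}

theorem IsFGForest.pos (hF : IsFGForest ρ F) : 0 < n := by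
  obtain ⟨-, ⟨v, hv⟩, hleaves, -⟩ := hF
  exact Fin.pos (hleaves v hv).choose

theorem IsFGForest.coset_eq_empty_of_notMem (hF : IsFGForest ρ F) :
    ∀ v ∈ F, ∀ l ∉ v.leaves, v.coset l = ∅ :=
  hF.2.2.2.2.2.2.2.2.2.2.1

variable (ρ) {N : ℕ} (f : Fin n ↪o Fin N)

theorem isFGForest_image_map_iff :
    IsFGForest ρ (FVertex.map f '' F) ↔ IsFGForest ρ F := by
  simp only [IsFGForest, Set.forall_mem_image, Set.exists_mem_image, isDirectChild_image_map_iff,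
    Set.finite_image_iff (FVertex.map_injective f).injOn, Set.image_nonempty, FVertex.map_leaves,
    FVertex.map_label, Finset.map_nonempty, ← Finset.map_inter, Finset.map_subset_map,
    Finset.map_ssubset_map, Finset.map_inj, (FVertex.map_injective f).ne_iff,
    (FVertex.map_injective f).eq_iff, FVertex.map_below_map_iff, Finset.forall_mem_map,
    RelEmbedding.coe_toEmbedding, FVertex.map_coset_apply, Finset.min'_map_orderEmbedding,
    Finset.apply_mem_map_orderEmbedding, FVertex.forall_notMem_map_leaves_coset_eq_empty_iff,
    Finset.forall_map_eq_singleton_imp_iff]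

end ForestRelabel

section FallenLeaves

variable {G : Type*} [Group G] {h n : ℕ}

theorem image_comap_image_map {N : ℕ} (f : Fin n ↪o Fin N) (F : Set (FVertex n G)) :
    FVertex.comap f '' (FVertex.map f '' F) = F := by
  simp [Set.image_image, FVertex.comap_map]

theorem image_map_image_comap {N : ℕ} (f : Fin n ↪o Fin N) {F : Set (FVertex N G)}
    (hleaves : ∀ v ∈ F, ↑v.leaves ⊆ Set.range f) (hcoset : ∀ v ∈ F, ∀ l ∉ v.leaves, v.coset l = ∅) :
    FVertex.map f '' (FVertex.comap f '' F) = F := by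
  rw [Set.image_image, Set.image_congr fun v hv => FVertex.map_comap f (hleaves v hv) (hcoset v hv),
    Set.image_id']

noncomputable def complEmbedding (S : {S : Finset (Fin (h + n)) // S.card = h}) :
    Fin n ↪o Fin (h + n) :=
  S.1ᶜ.orderEmbOfFin (by rw [Finset.card_compl, Fintype.card_fin, S.2, Nat.add_sub_cancel_left])

theorem range_complEmbedding (S : {S : Finset (Fin (h + n)) // S.card = h}) :
    Set.range (complEmbedding S) = ↑S.1ᶜ :=
  Finset.range_orderEmbOfFin _ _

theorem leaves_subset_range_complEmbedding {F : Set (FVertex (h + n) G)}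
    (hF : (fallenLeaves F).card = h) {v : FVertex (h + n) G} (hv : v ∈ F) :
    ↑v.leaves ⊆ Set.range (complEmbedding ⟨fallenLeaves F, hF⟩) := by
  intro l hl
  simp only [range_complEmbedding, Finset.coe_compl, Set.mem_compl_iff, Finset.mem_coe,
    fallenLeaves, Finset.mem_filter, Finset.mem_univ, true_and, not_forall]
  exact ⟨v, hv, not_not.2 hl⟩

noncomputable def addFallenLeaves (S : {S : Finset (Fin (h + n)) // S.card = h})
    (F : Set (FVertex n G)) : Set (FVertex (h + n) G) :=
  FVertex.map (complEmbedding S) '' F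

noncomputable def removeFallenLeaves (F : Set (FVertex (h + n) G))
    (hF : (fallenLeaves F).card = h) : Set (FVertex n G) :=
  FVertex.comap (complEmbedding ⟨_, hF⟩) '' F

theorem fallenLeaves_addFallenLeaves_eq_iff (S : {S : Finset (Fin (h + n)) // S.card = h})
    (F : Set (FVertex n G)) : fallenLeaves (addFallenLeaves S F) = S ↔ fallenLeaves F = ∅ := by
  rw [addFallenLeaves, ← fallenLeaves_image_map_eq_compl_iff, complEmbedding,
    Finset.map_orderEmbOfFin_univ, compl_compl]

theorem addFallenLeaves_removeFallenLeaves {F : Set (FVertex (h + n) G)}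
    (hF : (fallenLeaves F).card = h) (hcoset : ∀ v ∈ F, ∀ l ∉ v.leaves, v.coset l = ∅) :
    addFallenLeaves ⟨_, hF⟩ (removeFallenLeaves F hF) = F :=
  image_map_image_comap _ (fun _ hv => leaves_subset_range_complEmbedding hF hv) hcoset

theorem removeFallenLeaves_addFallenLeaves (S : {S : Finset (Fin (h + n)) // S.card = h})
    {F : Set (FVertex n G)} (hF : fallenLeaves F = ∅)
    (hS : (fallenLeaves (addFallenLeaves S F)).card = h) :
    removeFallenLeaves (addFallenLeaves S F) hS = F := by
  have hS' : (⟨_, hS⟩ : {S : Finset (Fin (h + n)) // S.card = h}) = S :=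
    Subtype.ext ((fallenLeaves_addFallenLeaves_eq_iff S F).2 hF)
  rw [removeFallenLeaves, hS', addFallenLeaves, image_comap_image_map]

end FallenLeaves

def IsRelabelInvariant {G : Type*} [Group G] (P : (m : ℕ) → Set (FVertex m G) → Prop) : Prop :=
  ∀ ⦃m M : ℕ⦄ (f : Fin m ↪o Fin M) (F : Set (FVertex m G)), P M (FVertex.map f '' F) ↔ P m F

section SplitFallenLeaves

variable {G : Type*} [CommGroup G] {V : Type*} [AddCommGroup V] [Module ℂ V]
  (ρ : Representation ℂ G V) {P : (m : ℕ) → Set (FVertex m G) → Prop} {h n : ℕ}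

theorem removeFallenLeaves_spec (hP : IsRelabelInvariant P) {F : Set (FVertex (h + n) G)}
    (hF : IsFGForest ρ F) (hcard : (fallenLeaves F).card = h) (hPF : P _ F) :
    IsFGForest ρ (removeFallenLeaves F hcard) ∧ fallenLeaves (removeFallenLeaves F hcard) = ∅ ∧
      P n (removeFallenLeaves F hcard) := by
  have hadd := addFallenLeaves_removeFallenLeaves hcard hF.coset_eq_empty_of_notMem
  refine ⟨(isFGForest_image_map_iff ρ _).1 (hadd ▸ hF), ?_, (hP _ _).1 (hadd ▸ hPF)⟩
  rw [← fallenLeaves_addFallenLeaves_eq_iff ⟨_, hcard⟩, hadd]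

theorem addFallenLeaves_spec (hP : IsRelabelInvariant P)
    (S : {S : Finset (Fin (h + n)) // S.card = h}) {F : Set (FVertex n G)}
    (hF : IsFGForest ρ F) (hfallen : fallenLeaves F = ∅) (hPF : P _ F) :
    IsFGForest ρ (addFallenLeaves S F) ∧ (fallenLeaves (addFallenLeaves S F)).card = h ∧
      P (h + n) (addFallenLeaves S F) :=
  ⟨(isFGForest_image_map_iff ρ _).2 hF,
    by rw [(fallenLeaves_addFallenLeaves_eq_iff S F).2 hfallen, S.2], (hP _ _).2 hPF⟩

noncomputable def fallenLeavesEquiv (hP : IsRelabelInvariant P) (h n : ℕ) :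
    {F : Set (FVertex (h + n) G) // IsFGForest ρ F ∧ (fallenLeaves F).card = h ∧ P _ F} ≃
      {S : Finset (Fin (h + n)) // S.card = h} ×
        {F : Set (FVertex n G) // IsFGForest ρ F ∧ fallenLeaves F = ∅ ∧ P n F} where
  toFun F := (⟨_, F.2.2.1⟩, ⟨removeFallenLeaves F.1 F.2.2.1,
    removeFallenLeaves_spec ρ hP F.2.1 F.2.2.1 F.2.2.2⟩)
  invFun p := ⟨addFallenLeaves p.1 p.2.1, addFallenLeaves_spec ρ hP p.1 p.2.2.1 p.2.2.2.1 p.2.2.2.2⟩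
  left_inv F :=
    Subtype.ext (addFallenLeaves_removeFallenLeaves F.2.2.1 F.2.1.coset_eq_empty_of_notMem)
  right_inv p :=
    Prod.ext (Subtype.ext ((fallenLeaves_addFallenLeaves_eq_iff _ _).2 p.2.2.2.1))
      (Subtype.ext (removeFallenLeaves_addFallenLeaves _ p.2.2.2.1 _))

theorem card_forests_with_fallenLeaves (hP : IsRelabelInvariant P) (h n : ℕ) :
    Nat.card {F : Set (FVertex (h + n) G) // IsFGForest ρ F ∧ (fallenLeaves F).card = h ∧ P _ F} =
      (h + n).choose h *
        Nat.card {F : Set (FVertex n G) // IsFGForest ρ F ∧ fallenLeaves F = ∅ ∧ P n F} := by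
  rw [Nat.card_congr (fallenLeavesEquiv ρ hP h n), Nat.card_prod, Nat.card_eq_fintype_card,
    Fintype.card_finset_len, Fintype.card_fin]

end SplitFallenLeaves

namespace MvPowerSeries

variable {σ : Type*} {a b : σ}

theorem X_mul_X_pow (m : ℕ) :
    (X a * X b : MvPowerSeries σ ℚ) ^ m = monomial (Finsupp.single a m + Finsupp.single b m) 1 := by
  rw [mul_pow, X_pow_eq, X_pow_eq, monomial_mul_monomial, one_mul]

theorem coeff_mvExp_X_mul_X (hab : a ≠ b) (d : σ →₀ ℕ) :
    coeff d (mvExp (X a * X b : MvPowerSeries σ ℚ)) =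
      if d = Finsupp.single a (d b) + Finsupp.single b (d b) then ((d b).factorial : ℚ)⁻¹
      else 0 := by
  have hm : ∀ m, d = Finsupp.single a m + Finsupp.single b m → m = d b := by
    rintro m rfl
    simp [hab.symm]
  have hmem : d b ∈ Finset.range (d.sum (fun _ e => e) + 1) :=
    Finset.mem_range_succ_iff.2 (Finsupp.le_degree b d)
  rw [coeff_apply, mvExp, Finset.sum_eq_single_of_mem (d b) hmem]
  · rw [X_mul_X_pow, coeff_monomial, mul_ite, mul_one, mul_zero]
  · intro m _ hne
    rw [X_mul_X_pow, coeff_monomial, if_neg (fun h => hne (hm m h)), mul_zero]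

theorem coeff_mvExp_X_mul_X_mul (hab : a ≠ b) {g : MvPowerSeries σ ℚ}
    (hg : ∀ q, q b ≠ 0 → coeff q g = 0) (d : σ →₀ ℕ) :
    coeff d (mvExp (X a * X b) * g) =
      if d b ≤ d a then
        ((d b).factorial : ℚ)⁻¹ * coeff (d - (Finsupp.single a (d b) + Finsupp.single b (d b))) g
      else 0 := by
  set e := Finsupp.single a (d b) + Finsupp.single b (d b) with he
  have hea : e a = d b := by simp [he, hab.symm]
  have heb : e b = d b := by simp [he, hab]
  -- `g` does not involve `b`, so all of `d b` must come from a power of `X a * X b`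
  have hsupp : ∀ x ∈ Finset.HasAntidiagonal.antidiagonal d,
      coeff x.1 (mvExp (X a * X b)) * coeff x.2 g ≠ 0 → x.1 = e := by
    rintro ⟨p, q⟩ hx hne
    have hq : q b = 0 := by_contra fun h => hne (by rw [hg q h, mul_zero])
    have hp : p = Finsupp.single a (p b) + Finsupp.single b (p b) := by_contra fun h =>
      hne (by rw [coeff_mvExp_X_mul_X hab, if_neg h, zero_mul])
    have hpb : p b = d b := by
      rw [← Finset.HasAntidiagonal.mem_antidiagonal.1 hx, Finsupp.add_apply, hq, add_zero]
    rwa [hpb] at hp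
  rw [coeff_mul]
  split_ifs with hba
  · have hle : e ≤ d := by
      intro x
      by_cases hxa : x = a
      · rwa [hxa, hea]
      by_cases hxb : x = b
      · rw [hxb, heb]
      simp [he, Ne.symm hxa, Ne.symm hxb]
    rw [Finset.sum_eq_single_of_mem (e, d - e)
      (Finset.HasAntidiagonal.mem_antidiagonal.2 (add_tsub_cancel_of_le hle))]
    · rw [coeff_mvExp_X_mul_X hab, heb, if_pos rfl]
    · intro x hx hne
      by_contra h
      refine hne (Prod.ext (hsupp x hx h) ?_)
      rw [← Finset.HasAntidiagonal.mem_antidiagonal.1 hx, hsupp x hx h, add_tsub_cancel_left]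
  · refine Finset.sum_eq_zero fun x hx => by_contra fun h => hba ?_
    have hle : x.1 ≤ d := Finset.HasAntidiagonal.mem_antidiagonal.1 hx ▸ le_self_add
    rw [← hea, ← hsupp x hx h]
    exact hle a

end MvPowerSeries

section Series

variable {G : Type*} [CommGroup G] {V : Type*} [AddCommGroup V] [Module ℂ V]
  (ρ : Representation ℂ G V)

theorem isRelabelInvariant_labels_roots_attachedCount (r : ℕ) (a : ClosedProper ρ → ℕ) :
    IsRelabelInvariant fun _ F => (∀ v ∈ F, v.label ≠ ⊤) ∧ (rootsOf F).ncard = r ∧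
      ∀ H : ClosedProper ρ, attachedCount F H.1 = a H := by
  intro m M f F
  simp only [Set.forall_mem_image, FVertex.map_label, rootsOf_image_map,
    Set.ncard_image_of_injective _ (FVertex.map_injective f), attachedCount_image_map]

/-- `γ″(j, (a_H))` of the paper, for forests on the leaf set `Fin n`. -/
noncomputable def fallenFreeForestCount (n j : ℕ) (a : ClosedProper ρ → ℕ) : ℕ :=
  Nat.card {F : Set (FVertex n G) // IsFGForest ρ F ∧ (∀ v ∈ F, v.label ≠ ⊤) ∧
    fallenLeaves F = ∅ ∧ components F = j ∧ ∀ H : ClosedProper ρ, attachedCount F H.1 = a H}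

theorem card_forests_with_fallenLeaves_eq_choose_mul_count (h n j : ℕ) (hj : h ≤ j)
    (a : ClosedProper ρ → ℕ) :
    Nat.card {F : Set (FVertex (h + n) G) // IsFGForest ρ F ∧ (∀ v ∈ F, v.label ≠ ⊤) ∧
        (fallenLeaves F).card = h ∧ components F = j ∧
        ∀ H : ClosedProper ρ, attachedCount F H.1 = a H} =
      (h + n).choose h * fallenFreeForestCount ρ n (j - h) a := by
  have key := card_forests_with_fallenLeaves ρ
    (isRelabelInvariant_labels_roots_attachedCount ρ (j - h) a) h n
  convert key using 1
  · refine Nat.card_congr (Equiv.subtypeEquivRight fun F => ?_)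
    unfold components
    constructor <;> rintro ⟨hF, h₁, h₂, hcomp, hatt⟩ <;> exact ⟨hF, h₂, h₁, by omega, hatt⟩
  · congr 1
    refine Nat.card_congr (Equiv.subtypeEquivRight fun F => ?_)
    unfold components
    constructor <;> rintro ⟨hF, h₁, h₂, hcomp, hatt⟩ <;> exact ⟨hF, h₂, h₁, by simp_all, hatt⟩

theorem sVar_ne_tVar : sVar ρ ≠ tVar ρ := by simp [sVar, tVar]

theorem tHVar_ne_sVar (H : ClosedProper ρ) : tHVar ρ H ≠ sVar ρ := by simp [tHVar, sVar]

theorem tHVar_ne_tVar (H : ClosedProper ρ) : tHVar ρ H ≠ tVar ρ := by simp [tHVar, tVar]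

theorem coeff_gammaTildeH_sub_one_of_tVar_ne_zero {q : MVarT ρ →₀ ℕ} (hq : q (tVar ρ) ≠ 0) :
    MvPowerSeries.coeff q (GammaTildeH ρ - 1) = 0 := by
  have hq0 : q ≠ 0 := fun h => hq (by simp [h])
  rw [map_sub, MvPowerSeries.coeff_one, if_neg hq0, sub_zero, MvPowerSeries.coeff_apply,
    GammaTildeH, if_neg hq0, if_pos hq]

theorem coeff_gammaTildeH_sub_one {q : MVarT ρ →₀ ℕ} (hq : q (tVar ρ) = 0) :
    MvPowerSeries.coeff q (GammaTildeH ρ - 1) =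
      (fallenFreeForestCount ρ (leafDeg ρ q) (q (sVar ρ)) (fun H => q (tHVar ρ H)) : ℚ) /
        (leafDeg ρ q).factorial := by
  rw [map_sub, MvPowerSeries.coeff_one, MvPowerSeries.coeff_apply, GammaTildeH]
  by_cases hq0 : q = 0
  · subst hq0
    have hdeg : leafDeg ρ 0 = 0 := by simp [leafDeg]
    rw [if_pos rfl, if_pos rfl, sub_self, fallenFreeForestCount,
      Nat.card_eq_zero.2 (.inl ⟨fun F => F.2.1.pos.ne' hdeg⟩), Nat.cast_zero, zero_div]
  · rw [if_neg hq0, if_neg hq0, if_neg (not_not.2 hq), sub_zero]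
    rfl

theorem coeff_gammaBarH_of_lt {d : MVarT ρ →₀ ℕ} (hd : d (sVar ρ) < d (tVar ρ)) :
    MvPowerSeries.coeff d (GammaBarH ρ) = 0 := by
  rw [MvPowerSeries.coeff_apply, GammaBarH, Nat.card_eq_zero.2 (.inl ⟨fun F => ?_⟩), Nat.cast_zero,
    zero_div]
  obtain ⟨-, -, hfallen, hcomp, -⟩ := F.2
  have := card_fallenLeaves_le_components F.1
  omega

theorem coeff_gammaBarH_of_le {d : MVarT ρ →₀ ℕ} (hd : d (tVar ρ) ≤ d (sVar ρ)) :
    MvPowerSeries.coeff d (GammaBarH ρ) =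
      ((d (tVar ρ)).factorial : ℚ)⁻¹ *
        ((fallenFreeForestCount ρ (leafDeg ρ d) (d (sVar ρ) - d (tVar ρ))
          (fun H => d (tHVar ρ H)) : ℚ) / (leafDeg ρ d).factorial) := by
  rw [MvPowerSeries.coeff_apply, GammaBarH,
    card_forests_with_fallenLeaves_eq_choose_mul_count ρ _ _ _ hd, Nat.cast_mul,
    Nat.cast_choose ℚ (Nat.le_add_right _ _), Nat.add_sub_cancel_left]
  field_simp

end Series

theorem GammaBarH_eq :
    GammaBarH ρ =
      mvExp (MvPowerSeries.X (sVar ρ) * MvPowerSeries.X (tVar ρ)) *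
        (GammaTildeH ρ - 1) := by
  ext d
  rw [MvPowerSeries.coeff_mvExp_X_mul_X_mul (sVar_ne_tVar ρ)
    (fun _ => coeff_gammaTildeH_sub_one_of_tVar_ne_zero ρ)]
  split_ifs with hts
  · set e := Finsupp.single (sVar ρ) (d (tVar ρ)) + Finsupp.single (tVar ρ) (d (tVar ρ))
    have hs : (d - e) (sVar ρ) = d (sVar ρ) - d (tVar ρ) := by simp [e, sVar_ne_tVar]
    have ht : (d - e) (tVar ρ) = 0 := by simp [e]
    have hH : ∀ H, (d - e) (tHVar ρ H) = d (tHVar ρ H) := by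
      simp [e, tHVar_ne_sVar, tHVar_ne_tVar]
    have hdeg : leafDeg ρ (d - e) = leafDeg ρ d := finsum_congr hH
    rw [coeff_gammaTildeH_sub_one ρ ht, coeff_gammaBarH_of_le ρ hts, hs, hdeg, funext hH]
  · exact coeff_gammaBarH_of_lt ρ (not_le.1 hts)
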